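/- arXiv:2307.07796 — 2 statements merged into one kernel-verified Lean document; each statement's English description precedes it below -/
import Mathlib

section
/- Let the diagonal entries {D_{ij} : 1 ≤ i ≤ B, 1 ≤ j ≤ n} of the masks D_1,…,D_B be i.i.d. Bernoulli(p) random variables with p ∈ (0,1). Fix x ∈ Q, let y = Σ_{i=1}^B D_i x_i, and let x̂ be any minimizer of ‖y − Σ_{i=1}^B D_i c_i‖₂² over c ∈ C. Then for every ε > 0, with probability at least 1 − 2^{Br+1} exp(−n ε²/(2B²)) one has (1/(nB))‖x − x̂‖₂² ≤ (1 + Bp/(1−p))·(δ/(nB)) + ρ²ε/(p − p²). -/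
/-!
Under i.i.d. masks the columns of `D` are independent, so for each codeword `c` the CSP objective
`f_D(c) = ‖y - ∑ᵢ Dᵢ cᵢ‖² = ∑ⱼ (∑ᵢ Dᵢⱼ (xᵢⱼ - cᵢⱼ))²` is a sum of `n` independent terms in
`[0, (Bρ)²]`. Hoeffding's inequality keeps it within `s = nρ²Bε/2` of its mean `m(c)`, from below
for every `c ∈ C` and from above for the encoding `x̃` of `x`, outside an event of probability at
most `(|C| + 1) e^{-nε²/(2B²)}`. The mean `(p - p²)‖x - c‖² + p² ∑ⱼ (∑ᵢ (xᵢⱼ - cᵢⱼ))²` lies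
between `(p - p²)‖x - c‖²` and `(p - p² + p²B)‖x - c‖²`, so minimality of `x̂` gives
`(p - p²)‖x - x̂‖² ≤ m(x̂) < f_D(x̂) + s ≤ f_D(x̃) + s < m(x̃) + 2s ≤ (p - p² + p²B)δ + 2s`.
-/

open MeasureTheory Finset

/-- The Bernoulli(p) distribution on ℝ, putting mass `p` on `1` and `1-p` on `0`. -/
noncomputable def bernoulliReal (p : ℝ) : Measure ℝ :=
  ENNReal.ofReal p • Measure.dirac (1 : ℝ) + ENNReal.ofReal (1 - p) • Measure.dirac (0 : ℝ)

open ProbabilityTheory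

section Bernoulli

variable {p : ℝ}

theorem isProbabilityMeasure_bernoulliReal (hp0 : 0 ≤ p) (hp1 : p ≤ 1) :
    IsProbabilityMeasure (bernoulliReal p) := by
  constructor
  simp [bernoulliReal, ← ENNReal.ofReal_add hp0 (sub_nonneg.2 hp1)]

theorem ae_abs_le_one_bernoulliReal : ∀ᵐ t ∂bernoulliReal p, |t| ≤ 1 := by
  rw [bernoulliReal, ae_add_measure_iff]
  exact ⟨Measure.ae_smul_measure (by simp) _, Measure.ae_smul_measure (by simp) _⟩

theorem integral_bernoulliReal (hp0 : 0 ≤ p) (hp1 : p ≤ 1) (f : ℝ → ℝ) :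
    ∫ t, f t ∂bernoulliReal p = p * f 1 + (1 - p) * f 0 := by
  rw [bernoulliReal, integral_add_measure, integral_smul_measure, integral_smul_measure,
    integral_dirac, integral_dirac, ENNReal.toReal_ofReal hp0,
    ENNReal.toReal_ofReal (sub_nonneg.2 hp1), smul_eq_mul, smul_eq_mul]
  all_goals exact (integrable_dirac enorm_lt_top).smul_measure ENNReal.ofReal_ne_top

theorem integral_id_bernoulliReal (hp0 : 0 ≤ p) (hp1 : p ≤ 1) :
    ∫ t, t ∂bernoulliReal p = p := by
  simp [integral_bernoulliReal hp0 hp1]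

theorem variance_id_bernoulliReal (hp0 : 0 ≤ p) (hp1 : p ≤ 1) :
    Var[id; bernoulliReal p] = p - p ^ 2 := by
  rw [variance_eq_integral measurable_id.aemeasurable, integral_bernoulliReal hp0 hp1]
  simp only [id, integral_id_bernoulliReal hp0 hp1]
  ring

end Bernoulli

theorem measurePreserving_transpose_pi {ι κ X : Type*} [Fintype ι] [Fintype κ]
    [MeasurableSpace X] (μ : ι → κ → Measure X) [∀ i j, IsProbabilityMeasure (μ i j)] :
    MeasurePreserving (fun (ω : ι → κ → X) j i ↦ ω i j)
      (Measure.pi fun i ↦ Measure.pi (μ i)) (Measure.pi fun j ↦ Measure.pi fun i ↦ μ i j) := by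
  refine ⟨by fun_prop, ?_⟩
  -- Both nested products are curried images of the product measure indexed by pairs.
  simp only [← Measure.infinitePi_eq_pi]
  rw [← Measure.infinitePi_map_curry, ← Measure.infinitePi_map_curry (fun j i ↦ μ i j),
    ← Measure.infinitePi_map_piCongrLeft (fun q : κ × ι ↦ μ q.2 q.1) (Equiv.prodComm ι κ),
    Measure.map_map (by fun_prop) (by fun_prop), Measure.map_map (by fun_prop) (by fun_prop)]
  rfl

theorem ofReal_one_sub_measureReal_le {α : Type*} [MeasurableSpace α] {μ : Measure α}
    [IsProbabilityMeasure μ] {s t : Set α} (hst : sᶜ ⊆ t) :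
    ENNReal.ofReal (1 - μ.real s) ≤ μ t := by
  have h := measureReal_union_le (μ := μ) s sᶜ
  rw [Set.union_compl_self, probReal_univ] at h
  calc ENNReal.ofReal (1 - μ.real s) ≤ ENNReal.ofReal (μ.real sᶜ) :=
        ENNReal.ofReal_le_ofReal (by linarith)
    _ = μ sᶜ := ofReal_measureReal
    _ ≤ μ t := measure_mono hst

section Hoeffding

variable {ι : Type*} [Fintype ι] {β : ι → Type*} [∀ i, MeasurableSpace (β i)]
  {ν : ∀ i, Measure (β i)} [∀ i, IsProbabilityMeasure (ν i)] {g : ∀ i, β i → ℝ} {a b s : ℝ}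

theorem measureReal_pi_le_sum_sub_integral_le (hg : ∀ i, Measurable (g i))
    (hgab : ∀ i, ∀ᵐ y ∂ν i, g i y ∈ Set.Icc a b) (hs : 0 ≤ s) :
    (Measure.pi ν).real {ω | s ≤ ∑ i, (g i (ω i) - ∫ y, g i y ∂ν i)} ≤
      Real.exp (-2 * s ^ 2 / (Fintype.card ι * (b - a) ^ 2)) := by
  have hsub (i : ι) : HasSubgaussianMGF (fun ω : ∀ i, β i ↦ g i (ω i) - ∫ y, g i y ∂ν i)
      ((‖b - a‖₊ / 2) ^ 2) (Measure.pi ν) := by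
    have h : HasSubgaussianMGF (fun y ↦ g i y - ∫ y, g i y ∂ν i) ((‖b - a‖₊ / 2) ^ 2)
        ((Measure.pi ν).map (Function.eval i)) := by
      rw [(measurePreserving_eval ν i).map_eq]
      exact hasSubgaussianMGF_of_mem_Icc (hg i).aemeasurable (hgab i)
    exact h.of_map (measurable_pi_apply i).aemeasurable
  have hindep : iIndepFun (fun i (ω : ∀ i, β i) ↦ g i (ω i) - ∫ y, g i y ∂ν i) (Measure.pi ν) :=
    iIndepFun_pi (X := fun i y ↦ g i y - ∫ y, g i y ∂ν i) fun i ↦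
      ((hg i).sub_const _).aemeasurable
  refine (HasSubgaussianMGF.measure_sum_ge_le_of_iIndepFun hindep (s := univ)
    (fun i _ ↦ hsub i) hs).trans_eq ?_
  congr 1
  simp only [sum_const, card_univ, nsmul_eq_mul, NNReal.coe_mul, NNReal.coe_natCast,
    NNReal.coe_pow, NNReal.coe_div, NNReal.coe_ofNat, coe_nnnorm, Real.norm_eq_abs, div_pow,
    sq_abs]
  rw [show (2 : ℝ) * (Fintype.card ι * ((b - a) ^ 2 / 2 ^ 2)) = Fintype.card ι * (b - a) ^ 2 / 2
    by ring, div_div_eq_mul_div]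
  ring

theorem measureReal_pi_sum_sub_integral_le_neg_le (hg : ∀ i, Measurable (g i))
    (hgab : ∀ i, ∀ᵐ y ∂ν i, g i y ∈ Set.Icc a b) (hs : 0 ≤ s) :
    (Measure.pi ν).real {ω | ∑ i, (g i (ω i) - ∫ y, g i y ∂ν i) ≤ -s} ≤
      Real.exp (-2 * s ^ 2 / (Fintype.card ι * (b - a) ^ 2)) := by
  have h := measureReal_pi_le_sum_sub_integral_le (g := fun i y ↦ -g i y) (a := -b) (b := -a)
    (fun i ↦ (hg i).neg) (fun i ↦ (hgab i).mono fun y hy ↦ ⟨neg_le_neg hy.2, neg_le_neg hy.1⟩) hs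
  convert h using 3
  · ext ω
    simp only [integral_neg, sub_neg_eq_add, sum_add_distrib, sum_neg_distrib, sum_sub_distrib]
    constructor <;> intro h <;> linarith
  · ring

end Hoeffding

theorem integral_sq_sum_mul_pi {ι : Type*} [Fintype ι] {ν : Measure ℝ} [IsProbabilityMeasure ν]
    (hν : MemLp id 2 ν) (e : ι → ℝ) :
    ∫ v, (∑ i, v i * e i) ^ 2 ∂Measure.pi (fun _ : ι ↦ ν) =
      Var[id; ν] * ∑ i, e i ^ 2 + (∫ t, t ∂ν) ^ 2 * (∑ i, e i) ^ 2 := by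
  set μ := Measure.pi fun _ : ι ↦ ν
  have hcoord (i : ι) : MemLp (fun v : ι → ℝ ↦ v i * e i) 2 μ :=
    (hν.mul_const (e i)).comp_measurePreserving (measurePreserving_eval _ i)
  have hsum : (∑ i, fun v : ι → ℝ ↦ v i * e i) = fun v ↦ ∑ i, v i * e i := by
    ext v; simp
  have hvar : Var[fun v ↦ ∑ i, v i * e i; μ] = Var[id; ν] * ∑ i, e i ^ 2 := by
    rw [← hsum, variance_sum_pi (X := fun i t ↦ t * e i) fun i ↦ hν.mul_const (e i), mul_sum]
    exact sum_congr rfl fun i _ ↦ variance_mul_const (e i) id ν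
  have hmean : ∫ v, ∑ i, v i * e i ∂μ = (∫ t, t ∂ν) * ∑ i, e i := by
    rw [integral_finsetSum _ fun i _ ↦ (hcoord i).integrable one_le_two, mul_sum]
    exact sum_congr rfl fun i _ ↦ by rw [integral_mul_const, integral_eval]
  have h := variance_eq_sub (hsum ▸ memLp_finsetSum' univ fun i _ ↦ hcoord i)
  simp only [Pi.pow_apply] at h
  rw [hmean, hvar] at h
  linarith

theorem ae_sq_sum_mul_mem_Icc {ι : Type*} [Fintype ι] {ν : Measure ℝ} [IsProbabilityMeasure ν]
    (hν : ∀ᵐ t ∂ν, |t| ≤ 1) {e : ι → ℝ} {ρ : ℝ} (he : ∀ i, |e i| ≤ ρ) :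
    ∀ᵐ v ∂Measure.pi (fun _ : ι ↦ ν), (∑ i, v i * e i) ^ 2 ∈
      Set.Icc 0 ((Fintype.card ι * ρ) ^ 2) := by
  have hv : ∀ᵐ v ∂Measure.pi (fun _ : ι ↦ ν), ∀ i, |v i| ≤ 1 :=
    ae_all_iff.2 fun i ↦ (measurePreserving_eval (fun _ : ι ↦ ν) i).quasiMeasurePreserving.ae hν
  filter_upwards [hv] with v hv
  have hbound : |∑ i, v i * e i| ≤ Fintype.card ι * ρ :=
    calc |∑ i, v i * e i| ≤ ∑ i, |v i * e i| := abs_sum_le_sum_abs _ _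
      _ ≤ ∑ _ : ι, ρ := sum_le_sum fun i _ ↦ by
        rw [abs_mul]; exact (mul_le_of_le_one_left (abs_nonneg _) (hv i)).trans (he i)
      _ = Fintype.card ι * ρ := by simp
  exact ⟨sq_nonneg _, sq_le_sq' (abs_le.1 hbound).1 (abs_le.1 hbound).2⟩

section MaskedEnergy

variable {ι κ : Type*} [Fintype ι] [Fintype κ]

def maskedEnergy (D e : ι → κ → ℝ) : ℝ := ∑ j, (∑ i, D i j * e i j) ^ 2

theorem maskedEnergy_sub (D x c : ι → κ → ℝ) :
    maskedEnergy D (x - c) = ∑ j, ((∑ i, D i j * x i j) - ∑ i, D i j * c i j) ^ 2 := by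
  simp [maskedEnergy, mul_sub]

/-- The expectation of `maskedEnergy D e` when the entries of `D` are i.i.d. with law `ν`
(`integral_sq_sum_mul_pi`, summed over columns). -/
noncomputable def maskedEnergyMean (ν : Measure ℝ) (e : ι → κ → ℝ) : ℝ :=
  Var[id; ν] * ∑ i, ∑ j, e i j ^ 2 + (∫ t, t ∂ν) ^ 2 * ∑ j, (∑ i, e i j) ^ 2

theorem mul_sum_sq_le_maskedEnergyMean (ν : Measure ℝ) (e : ι → κ → ℝ) :
    Var[id; ν] * ∑ i, ∑ j, e i j ^ 2 ≤ maskedEnergyMean ν e :=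
  le_add_of_nonneg_right (by positivity)

theorem maskedEnergyMean_le (ν : Measure ℝ) (e : ι → κ → ℝ) :
    maskedEnergyMean ν e ≤
      (Var[id; ν] + (∫ t, t ∂ν) ^ 2 * Fintype.card ι) * ∑ i, ∑ j, e i j ^ 2 := by
  have hcs : ∑ j, (∑ i, e i j) ^ 2 ≤ Fintype.card ι * ∑ i, ∑ j, e i j ^ 2 := by
    rw [sum_comm (f := fun i j ↦ e i j ^ 2), mul_sum]
    exact sum_le_sum fun j _ ↦ sq_sum_le_card_mul_sum_sq
  rw [maskedEnergyMean, add_mul, mul_assoc]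
  gcongr

end MaskedEnergy

section MaskedEnergyConcentration

variable {ι κ : Type*} [Fintype ι] [Fintype κ] {ν : Measure ℝ} [IsProbabilityMeasure ν]
  {e : ι → κ → ℝ} {ρ s : ℝ}

theorem maskedEnergy_sub_maskedEnergyMean (hν : MemLp id 2 ν) (D e : ι → κ → ℝ) :
    maskedEnergy D e - maskedEnergyMean ν e =
      ∑ j, ((∑ i, D i j * e i j) ^ 2 - ∫ v, (∑ i, v i * e i j) ^ 2 ∂Measure.pi fun _ : ι ↦ ν) := by
  simp only [sum_sub_distrib, integral_sq_sum_mul_pi hν, maskedEnergy, maskedEnergyMean,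
    sum_add_distrib, ← mul_sum]
  rw [sum_comm (f := fun i j ↦ e i j ^ 2)]

theorem measureReal_maskedEnergy_le_sub_le (hν : ∀ᵐ t ∂ν, |t| ≤ 1) (he : ∀ i j, |e i j| ≤ ρ)
    (hs : 0 ≤ s) :
    (Measure.pi fun _ : ι ↦ Measure.pi fun _ : κ ↦ ν).real
        {D | maskedEnergy D e ≤ maskedEnergyMean ν e - s} ≤
      Real.exp (-2 * s ^ 2 / (Fintype.card κ * (Fintype.card ι * ρ) ^ 4)) := by
  have h2 : MemLp id 2 ν := MemLp.of_bound aestronglyMeasurable_id 1 (by simpa using hν)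
  -- After transposing `D`, its columns are the independent coordinates of a product measure.
  have h := measureReal_pi_sum_sub_integral_le_neg_le (ν := fun _ : κ ↦ Measure.pi fun _ : ι ↦ ν)
    (g := fun j v ↦ (∑ i, v i * e i j) ^ 2) (fun j ↦ by fun_prop)
    (fun j ↦ ae_sq_sum_mul_mem_Icc hν (he · j)) hs
  rw [← (measurePreserving_transpose_pi fun _ _ ↦ ν).measureReal_preimage
    (measurableSet_le (by fun_prop) measurable_const).nullMeasurableSet] at h
  convert h using 3
  · ext D
    simp only [Set.mem_preimage, Set.mem_ofPred_eq, ← maskedEnergy_sub_maskedEnergyMean h2]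
    constructor <;> intro h <;> linarith
  · ring

theorem measureReal_maskedEnergyMean_add_le_le (hν : ∀ᵐ t ∂ν, |t| ≤ 1) (he : ∀ i j, |e i j| ≤ ρ)
    (hs : 0 ≤ s) :
    (Measure.pi fun _ : ι ↦ Measure.pi fun _ : κ ↦ ν).real
        {D | maskedEnergyMean ν e + s ≤ maskedEnergy D e} ≤
      Real.exp (-2 * s ^ 2 / (Fintype.card κ * (Fintype.card ι * ρ) ^ 4)) := by
  have h2 : MemLp id 2 ν := MemLp.of_bound aestronglyMeasurable_id 1 (by simpa using hν)
  have h := measureReal_pi_le_sum_sub_integral_le (ν := fun _ : κ ↦ Measure.pi fun _ : ι ↦ ν)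
    (g := fun j v ↦ (∑ i, v i * e i j) ^ 2) (fun j ↦ by fun_prop)
    (fun j ↦ ae_sq_sum_mul_mem_Icc hν (he · j)) hs
  rw [← (measurePreserving_transpose_pi fun _ _ ↦ ν).measureReal_preimage
    (measurableSet_le measurable_const (by fun_prop)).nullMeasurableSet] at h
  convert h using 3
  · ext D
    simp only [Set.mem_preimage, Set.mem_ofPred_eq, ← maskedEnergy_sub_maskedEnergyMean h2]
    constructor <;> intro h <;> linarith
  · ring

end MaskedEnergyConcentration

section Deviation

variable {ι κ : Type*} [Fintype ι] [Fintype κ]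

def maskedEnergyDeviation (ν : Measure ℝ) (C : Finset (ι → κ → ℝ)) (x c₀ : ι → κ → ℝ) (s : ℝ) :
    Set (ι → κ → ℝ) :=
  (⋃ c ∈ C, {D | maskedEnergy D (x - c) ≤ maskedEnergyMean ν (x - c) - s}) ∪
    {D | maskedEnergyMean ν (x - c₀) + s ≤ maskedEnergy D (x - c₀)}

variable {ν : Measure ℝ}

theorem measureReal_maskedEnergyDeviation_le [IsProbabilityMeasure ν] (hν : ∀ᵐ t ∂ν, |t| ≤ 1)
    {C : Finset (ι → κ → ℝ)} {x c₀ : ι → κ → ℝ} (hc₀ : c₀ ∈ C) {ρ s : ℝ}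
    (he : ∀ c ∈ C, ∀ i j, |(x - c) i j| ≤ ρ) (hs : 0 ≤ s) :
    (Measure.pi fun _ : ι ↦ Measure.pi fun _ : κ ↦ ν).real (maskedEnergyDeviation ν C x c₀ s) ≤
      (C.card + 1) * Real.exp (-2 * s ^ 2 / (Fintype.card κ * (Fintype.card ι * ρ) ^ 4)) := by
  refine (measureReal_union_le _ _).trans ?_
  grw [measureReal_biUnion_finset_le, add_one_mul, ← nsmul_eq_mul, ← sum_const,
    measureReal_maskedEnergyMean_add_le_le hν (he c₀ hc₀) hs]
  gcongr with c hc
  exact measureReal_maskedEnergy_le_sub_le hν (he c hc) hs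

theorem mul_sum_sq_le_of_notMem_maskedEnergyDeviation {C : Finset (ι → κ → ℝ)}
    {x c₀ ĉ D : ι → κ → ℝ} {s δ : ℝ} (hD : D ∉ maskedEnergyDeviation ν C x c₀ s) (hĉ : ĉ ∈ C)
    (hmin : maskedEnergy D (x - ĉ) ≤ maskedEnergy D (x - c₀))
    (hc₀ : ∑ i, ∑ j, (x - c₀) i j ^ 2 ≤ δ) :
    Var[id; ν] * ∑ i, ∑ j, (x - ĉ) i j ^ 2 ≤
      (Var[id; ν] + (∫ t, t ∂ν) ^ 2 * Fintype.card ι) * δ + 2 * s := by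
  simp only [maskedEnergyDeviation, Set.mem_union, Set.mem_iUnion, not_or, not_exists] at hD
  have hĉ' : maskedEnergyMean ν (x - ĉ) - s < maskedEnergy D (x - ĉ) := not_le.1 (hD.1 ĉ hĉ)
  have hc₀' : maskedEnergy D (x - c₀) < maskedEnergyMean ν (x - c₀) + s := not_le.1 hD.2
  have hK : 0 ≤ Var[id; ν] + (∫ t, t ∂ν) ^ 2 * Fintype.card ι :=
    add_nonneg (variance_nonneg _ _) (by positivity)
  linarith [mul_sum_sq_le_maskedEnergyMean ν (x - ĉ), maskedEnergyMean_le ν (x - c₀),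
    mul_le_mul_of_nonneg_left hc₀ hK]

end Deviation

theorem one_div_mul_le_of_mul_le {n B p δ ρ ε T : ℝ} (hn : 0 < n) (hB : 0 < B) (hp0 : 0 < p)
    (hp1 : p < 1) (hT : (p - p ^ 2) * T ≤ (p - p ^ 2 + p ^ 2 * B) * δ + n * ρ ^ 2 * B * ε) :
    1 / (n * B) * T ≤ (1 + B * p / (1 - p)) * (δ / (n * B)) + ρ ^ 2 * ε / (p - p ^ 2) := by
  have hq : 0 < p - p ^ 2 := by nlinarith
  have h1p : 1 - p ≠ 0 := by linarith
  calc 1 / (n * B) * T = (p - p ^ 2) * T / ((p - p ^ 2) * (n * B)) := by field_simp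
    _ ≤ ((p - p ^ 2 + p ^ 2 * B) * δ + n * ρ ^ 2 * B * ε) / ((p - p ^ 2) * (n * B)) := by gcongr
    _ = (1 + B * p / (1 - p)) * (δ / (n * B)) + ρ ^ 2 * ε / (p - p ^ 2) := by field_simp

theorem csp_iid_bernoulli_masks_general
    (n B : ℕ) (hn : 1 ≤ n) (hB : 1 ≤ B)
    (ρ δ r p ε : ℝ) (hρ : 0 < ρ)
    (hp : p ∈ Set.Ioo (0 : ℝ) 1) (hε : 0 < ε)
    -- the signal class with ℓ∞ bound ρ/2
    (Q : Set (Fin B → Fin n → ℝ))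
    (hQ : ∀ x ∈ Q, ∀ i j, |x i j| ≤ ρ / 2)
    -- the codebook of a rate-r distortion-δ compression code
    (C : Finset (Fin B → Fin n → ℝ))
    (hCcard : (C.card : ℝ) ≤ 2 ^ ((B : ℝ) * r))
    (hCbound : ∀ c ∈ C, ∀ i j, |c i j| ≤ ρ / 2)
    (enc : (Fin B → Fin n → ℝ) → (Fin B → Fin n → ℝ))
    (henc : ∀ x ∈ Q, enc x ∈ C ∧ ∑ i, ∑ j, (x i j - enc x i j) ^ 2 ≤ δ)
    -- the fixed signal
    (x : Fin B → Fin n → ℝ) (hx : x ∈ Q)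
    -- the CSP estimator: for each mask realization D, xhat D minimizes
    -- ‖y - ∑ᵢ Dᵢ cᵢ‖₂² over c ∈ C, where y = ∑ᵢ Dᵢ xᵢ
    (xhat : (Fin B → Fin n → ℝ) → (Fin B → Fin n → ℝ))
    (hxhat : ∀ D : Fin B → Fin n → ℝ, xhat D ∈ C ∧ ∀ c ∈ C,
      ∑ j, ((∑ i, D i j * x i j) - ∑ i, D i j * xhat D i j) ^ 2 ≤
        ∑ j, ((∑ i, D i j * x i j) - ∑ i, D i j * c i j) ^ 2) :
    (Measure.pi fun _ : Fin B => Measure.pi fun _ : Fin n => bernoulliReal p)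
      {D : Fin B → Fin n → ℝ |
        (1 / (n * B : ℝ)) * ∑ i, ∑ j, (x i j - xhat D i j) ^ 2 ≤
          (1 + B * p / (1 - p)) * (δ / (n * B)) + ρ ^ 2 * ε / (p - p ^ 2)} ≥
      ENNReal.ofReal
        (1 - 2 ^ ((B : ℝ) * r + 1) * Real.exp (-(n * ε ^ 2) / (2 * B ^ 2))) := by
  obtain ⟨hp0, hp1⟩ := hp
  have := isProbabilityMeasure_bernoulliReal hp0.le hp1.le
  obtain ⟨hx₀C, hx₀δ⟩ := henc x hx
  have he (c) (hc : c ∈ C) (i j) : |(x - c) i j| ≤ ρ := by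
    simpa using (abs_sub _ _).trans (add_le_add (hQ x hx i j) (hCbound c hc i j))
  set s : ℝ := n * ρ ^ 2 * B * ε / 2 with hs
  have hbad := measureReal_maskedEnergyDeviation_le (ae_abs_le_one_bernoulliReal (p := p)) hx₀C he
    (s := s) (by positivity)
  refine (ENNReal.ofReal_le_ofReal ?_).trans (ofReal_one_sub_measureReal_le
    (s := maskedEnergyDeviation (bernoulliReal p) C x (enc x) s) fun D hD ↦ ?_)
  · have hcard : (C.card : ℝ) + 1 ≤ 2 ^ ((B : ℝ) * r + 1) := by
      rw [Real.rpow_add_one two_ne_zero]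
      linarith [show (1 : ℝ) ≤ C.card by exact_mod_cast card_pos.2 ⟨_, hx₀C⟩]
    have hE : -2 * s ^ 2 / (Fintype.card (Fin n) * (Fintype.card (Fin B) * ρ) ^ 4) =
        -(n * ε ^ 2) / (2 * B ^ 2) := by
      rw [hs, Fintype.card_fin, Fintype.card_fin]
      field_simp
    rw [hE] at hbad
    nlinarith [Real.exp_pos (-(n * ε ^ 2) / (2 * B ^ 2))]
  · obtain ⟨hĉC, hmin⟩ := hxhat D
    have hT := mul_sum_sq_le_of_notMem_maskedEnergyDeviation hD hĉC
      (by simpa only [maskedEnergy_sub] using hmin _ hx₀C) (by simpa using hx₀δ)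
    simp only [variance_id_bernoulliReal hp0.le hp1.le, integral_id_bernoulliReal hp0.le hp1.le,
      Fintype.card_fin, Pi.sub_apply] at hT
    exact one_div_mul_le_of_mul_le (by exact_mod_cast hn) (by exact_mod_cast hB) hp0 hp1
      (hT.trans_eq (by rw [hs]; ring))

/-- CSP recovery guarantee for i.i.d. Bernoulli(p) binary masks. -/
theorem csp_iid_bernoulli_masks
    (n B : ℕ) (hn : 1 ≤ n) (hB : 1 ≤ B)
    (ρ δ r p ε : ℝ) (hρ : 0 < ρ) (hδ : 0 ≤ δ) (hr : 0 < r)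
    (hp : p ∈ Set.Ioo (0 : ℝ) 1) (hε : 0 < ε)
    -- the signal class with ℓ∞ bound ρ/2
    (Q : Set (Fin B → Fin n → ℝ))
    (hQ : ∀ x ∈ Q, ∀ i j, |x i j| ≤ ρ / 2)
    -- the codebook of a rate-r distortion-δ compression code
    (C : Finset (Fin B → Fin n → ℝ))
    (hCcard : (C.card : ℝ) ≤ 2 ^ ((B : ℝ) * r))
    (hCbound : ∀ c ∈ C, ∀ i j, |c i j| ≤ ρ / 2)
    (enc : (Fin B → Fin n → ℝ) → (Fin B → Fin n → ℝ))
    (henc : ∀ x ∈ Q, enc x ∈ C ∧ ∑ i, ∑ j, (x i j - enc x i j) ^ 2 ≤ δ)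
    -- the fixed signal
    (x : Fin B → Fin n → ℝ) (hx : x ∈ Q)
    -- the CSP estimator: for each mask realization D, xhat D minimizes
    -- ‖y - ∑ᵢ Dᵢ cᵢ‖₂² over c ∈ C, where y = ∑ᵢ Dᵢ xᵢ
    (xhat : (Fin B → Fin n → ℝ) → (Fin B → Fin n → ℝ))
    (hxhat : ∀ D : Fin B → Fin n → ℝ, xhat D ∈ C ∧ ∀ c ∈ C,
      ∑ j, ((∑ i, D i j * x i j) - ∑ i, D i j * xhat D i j) ^ 2 ≤
        ∑ j, ((∑ i, D i j * x i j) - ∑ i, D i j * c i j) ^ 2) :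
    (Measure.pi fun _ : Fin B => Measure.pi fun _ : Fin n => bernoulliReal p)
      {D : Fin B → Fin n → ℝ |
        (1 / (n * B : ℝ)) * ∑ i, ∑ j, (x i j - xhat D i j) ^ 2 ≤
          (1 + B * p / (1 - p)) * (δ / (n * B)) + ρ ^ 2 * ε / (p - p ^ 2)} ≥
      ENNReal.ofReal
        (1 - 2 ^ ((B : ℝ) * r + 1) * Real.exp (-(n * ε ^ 2) / (2 * B ^ 2))) :=
  csp_iid_bernoulli_masks_general n B hn hB ρ δ r p ε hρ hp hε Q hQ C hCcard hCbound enc henc x hx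
    xhat hxhat
end

section
/- Fix p ∈ (0,1), ε_1, ε_2 ≥ 0, diagonal matrices D_i = diag(D_{i1},…,D_{in}) ∈ ℝ^{n×n} (i = 1,…,B), x = (x_1,…,x_B) ∈ ℝ^{nB}, a finite set C ⊆ ℝ^{nB}, and x̃ ∈ C. Suppose (i) (1/n)‖Σ_{i=1}^B D_i (x_i − x̃_i)‖₂² ≤ (p²/n)‖Σ_{i=1}^B (x_i − x̃_i)‖₂² + ((p−p²)/n)‖x − x̃‖₂² + Bρ²ε_1, and (ii) for every c ∈ C, (1/n)‖Σ_{i=1}^B D_i (x_i − c_i)‖₂² ≥ (p²/n)‖Σ_{i=1}^B (x_i − c_i)‖₂² + ((p−p²)/n)‖x − c‖₂² − Bρ²ε_2. Then any minimizer x̂ of ‖Σ_{i=1}^B D_i(x_i − c_i)‖₂² over c ∈ C satisfies ((p−p²)/n)‖x − x̂‖₂² ≤ ((p + (B−1)p²)/n)‖x − x̃‖₂² + Bρ²(ε_1 + ε_2). -/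
/-!
Evaluate the lower concentration bound at the minimizer `x̂` and drop its nonnegative
`p²‖Σᵢ (xᵢ - x̂ᵢ)‖²` term; minimality of `x̂` lets us pass to `x̃`, where the upper
concentration bound applies. Its term `p²‖Σᵢ (xᵢ - x̃ᵢ)‖²` is at most `B p² ‖x - x̃‖²` by
Cauchy–Schwarz, which turns the coefficient `p - p²` into `p + (B - 1) p²`.
-/

open Finset

theorem sum_sq_sum_le_card_mul_sum_sum_sq {ι κ α : Type*} [Fintype ι] [Fintype κ]
    [Semiring α] [LinearOrder α] [IsStrictOrderedRing α] [ExistsAddOfLE α] (v : ι → κ → α) :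
    ∑ j, (∑ i, v i j) ^ 2 ≤ Fintype.card ι * ∑ i, ∑ j, v i j ^ 2 := by
  rw [Finset.sum_comm, Finset.mul_sum]
  exact Finset.sum_le_sum fun j _ => sq_sum_le_card_mul_sum_sq

theorem csp_deterministic_bound_general
    (n B : ℕ) (ρ p ε₁ ε₂ : ℝ)
    (D : Fin B → Fin n → ℝ)
    (x : Fin B → Fin n → ℝ)
    (C : Finset (Fin B → Fin n → ℝ))
    (xt : Fin B → Fin n → ℝ) (hxt : xt ∈ C)
    (h1 : (1 / (n : ℝ)) * ∑ j, (∑ i, D i j * (x i j - xt i j)) ^ 2 ≤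
      (p ^ 2 / n) * ∑ j, (∑ i, (x i j - xt i j)) ^ 2
        + ((p - p ^ 2) / n) * ∑ i, ∑ j, (x i j - xt i j) ^ 2
        + B * ρ ^ 2 * ε₁)
    (h2 : ∀ c ∈ C, (1 / (n : ℝ)) * ∑ j, (∑ i, D i j * (x i j - c i j)) ^ 2 ≥
      (p ^ 2 / n) * ∑ j, (∑ i, (x i j - c i j)) ^ 2
        + ((p - p ^ 2) / n) * ∑ i, ∑ j, (x i j - c i j) ^ 2
        - B * ρ ^ 2 * ε₂)
    (xhat : Fin B → Fin n → ℝ) (hhatmem : xhat ∈ C)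
    (hhatmin : ∀ c ∈ C,
      ∑ j, (∑ i, D i j * (x i j - xhat i j)) ^ 2 ≤
        ∑ j, (∑ i, D i j * (x i j - c i j)) ^ 2) :
    ((p - p ^ 2) / n) * ∑ i, ∑ j, (x i j - xhat i j) ^ 2 ≤
      ((p + ((B : ℝ) - 1) * p ^ 2) / n) * ∑ i, ∑ j, (x i j - xt i j) ^ 2
        + B * ρ ^ 2 * (ε₁ + ε₂) := by
  have lower_at_hat := h2 xhat hhatmem
  have hat_term_nonneg : 0 ≤ (p ^ 2 / n) * ∑ j, (∑ i, (x i j - xhat i j)) ^ 2 := by positivity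
  have hat_le_tilde := mul_le_mul_of_nonneg_left (hhatmin xt hxt)
    (by positivity : (0 : ℝ) ≤ 1 / n)
  have cauchy_schwarz := mul_le_mul_of_nonneg_left
    (sum_sq_sum_le_card_mul_sum_sum_sq fun i j => x i j - xt i j)
    (by positivity : (0 : ℝ) ≤ p ^ 2 / n)
  rw [Fintype.card_fin] at cauchy_schwarz
  have coeff_split : ((p + ((B : ℝ) - 1) * p ^ 2) / n) * ∑ i, ∑ j, (x i j - xt i j) ^ 2 =
      ((p - p ^ 2) / n) * ∑ i, ∑ j, (x i j - xt i j) ^ 2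
        + (p ^ 2 / n) * (B * ∑ i, ∑ j, (x i j - xt i j) ^ 2) := by ring
  linarith

/-- Deterministic error bound for the CSP minimizer, given the two
concentration events. Frames are indexed by `i : Fin B`, coordinates by `j : Fin n`;
`‖Σ_i v_i‖₂² = Σ_j (Σ_i v_{ij})²` and `‖x − c‖₂² = Σ_i Σ_j (x_{ij} − c_{ij})²`. -/
theorem csp_deterministic_bound
    (n B : ℕ) (ρ p ε₁ ε₂ : ℝ)
    (hρ : 0 < ρ) (hp : p ∈ Set.Ioo (0 : ℝ) 1) (hε₁ : 0 ≤ ε₁) (hε₂ : 0 ≤ ε₂)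
    (D : Fin B → Fin n → ℝ)
    (x : Fin B → Fin n → ℝ)
    (C : Finset (Fin B → Fin n → ℝ))
    (xt : Fin B → Fin n → ℝ) (hxt : xt ∈ C)
    (h1 : (1 / (n : ℝ)) * ∑ j, (∑ i, D i j * (x i j - xt i j)) ^ 2 ≤
      (p ^ 2 / n) * ∑ j, (∑ i, (x i j - xt i j)) ^ 2
        + ((p - p ^ 2) / n) * ∑ i, ∑ j, (x i j - xt i j) ^ 2
        + B * ρ ^ 2 * ε₁)
    (h2 : ∀ c ∈ C, (1 / (n : ℝ)) * ∑ j, (∑ i, D i j * (x i j - c i j)) ^ 2 ≥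
      (p ^ 2 / n) * ∑ j, (∑ i, (x i j - c i j)) ^ 2
        + ((p - p ^ 2) / n) * ∑ i, ∑ j, (x i j - c i j) ^ 2
        - B * ρ ^ 2 * ε₂)
    (xhat : Fin B → Fin n → ℝ) (hhatmem : xhat ∈ C)
    (hhatmin : ∀ c ∈ C,
      ∑ j, (∑ i, D i j * (x i j - xhat i j)) ^ 2 ≤
        ∑ j, (∑ i, D i j * (x i j - c i j)) ^ 2) :
    ((p - p ^ 2) / n) * ∑ i, ∑ j, (x i j - xhat i j) ^ 2 ≤
      ((p + ((B : ℝ) - 1) * p ^ 2) / n) * ∑ i, ∑ j, (x i j - xt i j) ^ 2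
        + B * ρ ^ 2 * (ε₁ + ε₂) :=
  csp_deterministic_bound_general n B ρ p ε₁ ε₂ D x C xt hxt h1 h2 xhat hhatmem hhatmin
end
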